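/- arXiv:1510.05550 — 6 statements merged into one kernel-verified Lean document; each statement's English description precedes it below -/
import Mathlib

section
/- Let n ≥ 2 and let H be an n×n real symmetric matrix with eigenvalues λ₁ ≤ λ₂ ≤ ⋯ ≤ λₙ. Suppose there is perfect state transfer from vertex 1 to vertex 2 at time t₀, i.e. |(exp(i t₀ H))₁₂| = 1. Then for every real h with |h|·(λₙ − λ₁) < π, the fidelity at the perturbed time satisfies p(t₀ + h) ≥ (1/4)·|e^{i h λ₁} + e^{i h λₙ}|². -/
/-!
Diagonalising `H = Qᵀ diag(λ) Q`, the amplitude `U(t)₁₂` equals `∑ₖ aₖ e^{itλₖ}` with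
`aₖ = Qₖ₁ Qₖ₂`, and `∑ₖ |aₖ| ≤ 1` because the columns of `Q` are orthonormal. Perfect state
transfer at `t₀` forces equality in the triangle inequality: all terms `aₖ e^{it₀λₖ}` share one
phase and `∑ₖ |aₖ| = 1`. Hence `U(t₀ + h)₁₂` is, up to a unimodular factor, a convex combination
of the points `e^{ihλₖ}`, whose arguments lie within `|h|(λₙ - λ₁)/2 ≤ π/2` of `h(λ₁ + λₙ)/2`;
its modulus is therefore at least `cos(h(λₙ - λ₁)/2)`, and `¼|e^{ihλ₁} + e^{ihλₙ}|²` is exactly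
the square of that cosine.
-/

open Matrix

/-- The time evolution `exp(i t H)` of a real symmetric Hamiltonian `H`,
regarded as a complex matrix. -/
noncomputable def timeEvo {n : ℕ} (H : Matrix (Fin n) (Fin n) ℝ) (t : ℝ) :
    Matrix (Fin n) (Fin n) ℂ :=
  NormedSpace.exp (Complex.I • (t : ℂ) • H.map (fun x => (x : ℂ)))

open Complex ComplexConjugate

theorem conj_sum_mul_eq_of_sum_norm_le {ι : Type*} [Fintype ι] {z : ι → ℂ}
    (hz : ∑ k, ‖z k‖ ≤ ‖∑ k, z k‖) (k : ι) :
    conj (∑ l, z l) * z k = (‖∑ l, z l‖ * ‖z k‖ : ℝ) := by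
  set u := ∑ l, z l
  have hterm_le : ∀ l ∈ Finset.univ, (conj u * z l).re ≤ ‖u‖ * ‖z l‖ := fun l _ => by
    simpa only [norm_mul, norm_conj] using re_le_norm (conj u * z l)
  have hsum_eq : ∑ l, (conj u * z l).re = ∑ l, ‖u‖ * ‖z l‖ := by
    refine le_antisymm (Finset.sum_le_sum hterm_le) ?_
    calc ∑ l, ‖u‖ * ‖z l‖ ≤ ‖u‖ * ‖u‖ := by
          rw [← Finset.mul_sum]; exact mul_le_mul_of_nonneg_left hz (norm_nonneg u)
      _ = ∑ l, (conj u * z l).re := by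
          rw [← re_sum, ← Finset.mul_sum]
          change _ = (conj u * u).re
          rw [mul_comm (conj u), mul_conj, normSq_eq_norm_sq, sq, ofReal_re]
  have hre : (conj u * z k).re = ‖conj u * z k‖ := by
    rw [norm_mul, norm_conj]
    exact (Finset.sum_eq_sum_iff_of_le hterm_le).mp hsum_eq k (Finset.mem_univ k)
  rw [eq_coe_norm_of_nonneg (re_eq_norm.mp hre), norm_mul, norm_conj]

theorem cos_le_norm_sum_mul_exp {ι : Type*} [Fintype ι] {w θ : ι → ℝ}
    (hw : ∀ k, 0 ≤ w k) (hw1 : ∑ k, w k = 1) {c φ : ℝ} (hφ : φ ≤ Real.pi)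
    (hθ : ∀ k, |θ k - c| ≤ φ) :
    Real.cos φ ≤ ‖∑ k, (w k : ℂ) * exp (θ k * I)‖ := by
  have hcos : ∀ k, Real.cos φ ≤ Real.cos (θ k - c) := fun k => by
    rw [← Real.cos_abs (θ k - c)]
    exact Real.cos_le_cos_of_nonneg_of_le_pi (abs_nonneg _) hφ (hθ k)
  have hrotate : exp ((-c : ℝ) * I) * ∑ k, (w k : ℂ) * exp (θ k * I)
      = ∑ k, (w k : ℂ) * exp ((θ k - c : ℝ) * I) := by
    rw [Finset.mul_sum]
    refine Finset.sum_congr rfl fun k _ => ?_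
    rw [mul_left_comm, ← exp_add]
    push_cast
    ring_nf
  calc Real.cos φ = ∑ k, w k * Real.cos φ := by rw [← Finset.sum_mul, hw1, one_mul]
    _ ≤ ∑ k, w k * Real.cos (θ k - c) :=
        Finset.sum_le_sum fun k _ => mul_le_mul_of_nonneg_left (hcos k) (hw k)
    _ = (exp ((-c : ℝ) * I) * ∑ k, (w k : ℂ) * exp (θ k * I)).re := by
        simp only [hrotate, re_sum, re_ofReal_mul, exp_ofReal_mul_I_re]
    _ ≤ ‖∑ k, (w k : ℂ) * exp (θ k * I)‖ :=
        (re_le_norm _).trans_eq (by rw [norm_mul, norm_exp_ofReal_mul_I, one_mul])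

theorem sum_abs_mul_le_one_of_transpose_mul_self_eq_one {m n : Type*} [Fintype m]
    [DecidableEq n] {Q : Matrix m n ℝ} (hQ : Qᵀ * Q = 1) (i j : n) :
    ∑ k, |Q k i * Q k j| ≤ 1 := by
  have hcol : ∀ i, ∑ k, Q k i ^ 2 = 1 := fun i => by
    simpa [Matrix.mul_apply, sq] using congrFun (congrFun hQ i) i
  calc ∑ k, |Q k i * Q k j| ≤ ∑ k, (Q k i ^ 2 + Q k j ^ 2) / 2 :=
        Finset.sum_le_sum fun k _ => by
          rw [abs_mul, ← sq_abs (Q k i), ← sq_abs (Q k j)]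
          nlinarith [two_mul_le_add_sq |Q k i| |Q k j|]
    _ = 1 := by rw [← Finset.sum_div, Finset.sum_add_distrib, hcol, hcol]; norm_num

theorem norm_exp_mul_I_add_exp_mul_I_sq (x y : ℝ) :
    ‖exp (x * I) + exp (y * I)‖ ^ 2 = 4 * Real.cos ((y - x) / 2) ^ 2 := by
  have hfactor : exp (x * I) + exp (y * I)
      = exp (((x + y) / 2 : ℝ) * I) * (2 * Real.cos ((y - x) / 2)) := by
    rw [ofReal_cos, two_cos, mul_add, ← exp_add, ← exp_add]
    push_cast
    ring_nf
  rw [hfactor, norm_mul, norm_exp_ofReal_mul_I, one_mul, norm_mul, ← ofReal_ofNat, norm_real,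
    norm_real, mul_pow, Real.norm_eq_abs, Real.norm_eq_abs, sq_abs, sq_abs]
  norm_num

theorem timeEvo_transpose_mul_diagonal_mul_apply {n : ℕ} (μ : Fin n → ℝ)
    {Q : Matrix (Fin n) (Fin n) ℝ} (hQ : Qᵀ * Q = 1) (t : ℝ) (i j : Fin n) :
    timeEvo (Qᵀ * diagonal μ * Q) t i j
      = ∑ k, exp ((t * μ k : ℝ) * I) * (Q k i * Q k j : ℝ) := by
  set P : Matrix (Fin n) (Fin n) ℂ := Q.map ofRealHom
  have hPtP : Pᵀ * P = 1 := by
    simpa only [map_one, RingHom.mapMatrix_apply, map_mul, transpose_map] using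
      congrArg ofRealHom.mapMatrix hQ
  have hPinv : P⁻¹ = Pᵀ := inv_eq_left_inv hPtP
  have hexponent : I • (t : ℂ) • (Qᵀ * diagonal μ * Q).map (fun x => (x : ℂ))
      = P⁻¹ * diagonal (fun k => (t * μ k : ℝ) * I) * P := by
    have hdiag :
        diagonal (fun k => (t * μ k : ℝ) * I) = (I * t) • (diagonal μ).map ofRealHom := by
      rw [diagonal_map (map_zero _), ← diagonal_smul]
      congr 1
      ext k
      simp only [Pi.smul_apply, ofRealHom_eq_coe, smul_eq_mul]
      push_cast
      ring
    rw [hPinv, hdiag, smul_smul, Matrix.mul_smul, Matrix.smul_mul, mul_comm I]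
    congr 1
    change ofRealHom.mapMatrix (Qᵀ * diagonal μ * Q) = _
    rw [map_mul, map_mul, RingHom.mapMatrix_apply, transpose_map]
    rfl
  rw [timeEvo, hexponent, exp_conj' P _ (IsUnit.of_mul_eq_one_right _ hPtP), exp_diagonal, hPinv,
    mul_assoc, mul_apply]
  refine Finset.sum_congr rfl fun k _ => ?_
  simp [P, diagonal_mul, ← exp_eq_exp_ℂ]
  ring

theorem cos_le_norm_timeEvo_apply_of_norm_eq_one {n : ℕ} {μ : Fin n → ℝ}
    {Q : Matrix (Fin n) (Fin n) ℝ} (hQ : Qᵀ * Q = 1) {i j : Fin n} {t₀ : ℝ}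
    (hPST : ‖timeEvo (Qᵀ * diagonal μ * Q) t₀ i j‖ = 1) {lo hi : ℝ}
    (hμ : ∀ k, μ k ∈ Set.Icc lo hi) {h : ℝ} (hh : |h| * (hi - lo) ≤ Real.pi) :
    Real.cos (h * (hi - lo) / 2) ≤ ‖timeEvo (Qᵀ * diagonal μ * Q) (t₀ + h) i j‖ := by
  set z : Fin n → ℂ := fun k => exp ((t₀ * μ k : ℝ) * I) * (Q k i * Q k j : ℝ)
  have hu : timeEvo (Qᵀ * diagonal μ * Q) t₀ i j = ∑ k, z k :=
    timeEvo_transpose_mul_diagonal_mul_apply μ hQ t₀ i j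
  have hz_norm : ∀ k, ‖z k‖ = |Q k i * Q k j| := fun k => by
    rw [norm_mul, norm_exp_ofReal_mul_I, one_mul, norm_real, Real.norm_eq_abs]
  have hu_norm : ‖∑ l, z l‖ = 1 := hu ▸ hPST
  have hz_sum : ∑ k, ‖z k‖ = 1 := by
    refine le_antisymm ?_ (hu_norm ▸ norm_sum_le _ _)
    simpa only [hz_norm] using sum_abs_mul_le_one_of_transpose_mul_self_eq_one hQ i j
  have hphase : ∀ k, conj (∑ l, z l) * z k = ‖z k‖ := fun k => by
    simpa only [hu_norm, one_mul] using
      conj_sum_mul_eq_of_sum_norm_le (hz_sum.trans hu_norm.symm).le k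
  have hv : conj (∑ l, z l) * timeEvo (Qᵀ * diagonal μ * Q) (t₀ + h) i j
      = ∑ k, (‖z k‖ : ℂ) * exp ((h * μ k : ℝ) * I) := by
    rw [timeEvo_transpose_mul_diagonal_mul_apply μ hQ, Finset.mul_sum]
    refine Finset.sum_congr rfl fun k _ => ?_
    have hsplit : ((t₀ + h) * μ k : ℝ) * I = (t₀ * μ k : ℝ) * I + (h * μ k : ℝ) * I := by
      push_cast; ring
    rw [← hphase k, hsplit, exp_add]
    ring
  have hlohi : lo ≤ hi := (hμ i).1.trans (hμ i).2
  have hwidth : 0 ≤ |h| * (hi - lo) := mul_nonneg (abs_nonneg h) (sub_nonneg.2 hlohi)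
  calc Real.cos (h * (hi - lo) / 2) = Real.cos (|h| * (hi - lo) / 2) := by
        rw [← Real.cos_abs, abs_div, abs_mul, abs_of_nonneg (sub_nonneg.2 hlohi), abs_two]
    _ ≤ ‖∑ k, (‖z k‖ : ℂ) * exp ((h * μ k : ℝ) * I)‖ := by
        refine cos_le_norm_sum_mul_exp (fun k => norm_nonneg _) hz_sum (c := h * ((lo + hi) / 2))
          (by linarith) fun k => ?_
        rw [← mul_sub, abs_mul, mul_div_assoc]
        gcongr
        exact abs_le.2 ⟨by linarith [(hμ k).1], by linarith [(hμ k).2]⟩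
    _ = ‖timeEvo (Qᵀ * diagonal μ * Q) (t₀ + h) i j‖ := by
        rw [← hv, norm_mul, norm_conj, hu_norm, one_mul]

/-- Theorem 1 (timing-error bound): if there is perfect state transfer from vertex 1 to
vertex 2 at time `t₀` and `|h| (λₙ - λ₁) < π`, then
`p(t₀+h) ≥ ¼ |e^{ihλ₁} + e^{ihλₙ}|²`. -/
theorem stmt0 {n : ℕ} (hn : 2 ≤ n) (H : Matrix (Fin n) (Fin n) ℝ)
    (μ : Fin n → ℝ) (hmono : Monotone μ)
    (Q : Matrix (Fin n) (Fin n) ℝ) (hQ : Qᵀ * Q = 1)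
    (hHQ : H = Qᵀ * Matrix.diagonal μ * Q)
    (t₀ : ℝ)
    (hPST : ‖timeEvo H t₀ ⟨0, by omega⟩ ⟨1, by omega⟩‖ = 1)
    (h : ℝ) (hh : |h| * (μ ⟨n - 1, by omega⟩ - μ ⟨0, by omega⟩) < Real.pi) :
    (1 / 4) * ‖Complex.exp (Complex.I * (h : ℂ) * (μ ⟨0, by omega⟩ : ℂ)) +
        Complex.exp (Complex.I * (h : ℂ) * (μ ⟨n - 1, by omega⟩ : ℂ))‖ ^ 2
      ≤ ‖timeEvo H (t₀ + h) ⟨0, by omega⟩ ⟨1, by omega⟩‖ ^ 2 := by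
  subst hHQ
  set lo := μ ⟨0, by omega⟩
  set hi := μ ⟨n - 1, by omega⟩
  have hμ : ∀ k, μ k ∈ Set.Icc lo hi := fun k =>
    ⟨hmono (Fin.le_def.2 (Nat.zero_le _)), hmono (Fin.le_def.2 (Nat.le_sub_one_of_lt k.isLt))⟩
  have hspread : |h * (hi - lo) / 2| ≤ Real.pi / 2 := by
    rw [abs_div, abs_mul, abs_of_nonneg (sub_nonneg.2 (hμ ⟨0, by omega⟩).2), abs_two]
    linarith
  have hcos : 0 ≤ Real.cos (h * (hi - lo) / 2) :=
    Real.cos_nonneg_of_mem_Icc (abs_le.1 hspread)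
  have hexp_arg : ∀ x : ℝ, I * (h : ℂ) * (x : ℂ) = ((h * x : ℝ) : ℂ) * I := fun x => by
    push_cast; ring
  calc (1 / 4) * ‖exp (I * (h : ℂ) * (lo : ℂ)) + exp (I * (h : ℂ) * (hi : ℂ))‖ ^ 2
      = Real.cos (h * (hi - lo) / 2) ^ 2 := by
        rw [hexp_arg, hexp_arg, norm_exp_mul_I_add_exp_mul_I_sq, ← mul_sub]; ring
    _ ≤ _ := pow_le_pow_left₀ hcos
        (cos_le_norm_timeEvo_apply_of_norm_eq_one hQ hPST hμ hh.le) 2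
end

section
/- Let μ₁ ≤ μ₂ ≤ ⋯ ≤ μₙ be real numbers with μₙ − μ₁ < π, and let t₁, …, tₙ be nonnegative reals with Σⱼ tⱼ = 1. Then |Σⱼ tⱼ e^{i μⱼ}| ≥ |e^{i μ₁} + e^{i μₙ}|/2 = cos((μₙ − μ₁)/2). In particular, for any unit vector q ∈ ℂⁿ, |Σⱼ |qⱼ|² e^{i μⱼ}| ≥ |e^{i μ₁} + e^{i μₙ}|/2. -/
/-!
Let `c` be the midpoint and `d` the half-length of the arc `[a, b]`. Rotating the sum by
`e^{-ic}` does not change its modulus, and its real part becomes `∑ⱼ tⱼ cos (μⱼ - c)`; since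
`|μⱼ - c| ≤ d ≤ π`, each cosine is at least `cos d`, so the modulus is at least `cos d`.
The same rotation writes `e^{ia} + e^{ib} = e^{ic} · 2 cos d`.
-/

open Complex

lemma norm_exp_mul_I_add_exp_mul_I (a b : ℝ) :
    ‖exp (I * a) + exp (I * b)‖ = 2 * |Real.cos ((b - a) / 2)| := by
  have hfactor : exp (I * a) + exp (I * b)
      = exp (I * ↑((a + b) / 2)) * (2 * ↑(Real.cos ((b - a) / 2))) := by
    rw [ofReal_cos, two_cos, mul_add, ← exp_add, ← exp_add, add_comm (exp (I * a))]
    congr 2 <;> push_cast <;> ring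
  rw [hfactor, norm_mul, norm_exp_I_mul_ofReal, one_mul, norm_mul, norm_real,
    Real.norm_eq_abs, RCLike.norm_ofNat]

lemma re_exp_neg_mul_sum_mul_exp {ι : Type*} [Fintype ι] (t μ : ι → ℝ) (c : ℝ) :
    (exp (I * ↑(-c)) * ∑ j, (t j : ℂ) * exp (I * μ j)).re = ∑ j, t j * Real.cos (μ j - c) := by
  rw [Finset.mul_sum, re_sum]
  refine Finset.sum_congr rfl fun j _ => ?_
  rw [mul_left_comm, ← exp_add, show I * ↑(-c) + I * μ j = ↑(μ j - c) * I by push_cast; ring,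
    re_ofReal_mul, exp_ofReal_mul_I_re]

lemma cos_half_sub_le_norm_sum_mul_exp {ι : Type*} [Fintype ι] {a b : ℝ}
    (hab : b - a ≤ 2 * Real.pi) (μ : ι → ℝ) (hμ : ∀ j, μ j ∈ Set.Icc a b)
    (t : ι → ℝ) (ht : ∀ j, 0 ≤ t j) (hsum : ∑ j, t j = 1) :
    Real.cos ((b - a) / 2) ≤ ‖∑ j, (t j : ℂ) * exp (I * μ j)‖ := by
  set c := (a + b) / 2 with hc
  have hterm : ∀ j, Real.cos ((b - a) / 2) ≤ Real.cos (μ j - c) := fun j => by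
    obtain ⟨hja, hjb⟩ := hμ j
    rw [← Real.cos_abs (μ j - c)]
    exact Real.cos_le_cos_of_nonneg_of_le_pi (abs_nonneg _) (by linarith)
      (abs_sub_le_iff.2 ⟨by rw [hc]; linarith, by rw [hc]; linarith⟩)
  calc Real.cos ((b - a) / 2) = ∑ j, t j * Real.cos ((b - a) / 2) := by
        rw [← Finset.sum_mul, hsum, one_mul]
    _ ≤ ∑ j, t j * Real.cos (μ j - c) :=
        Finset.sum_le_sum fun j _ => mul_le_mul_of_nonneg_left (hterm j) (ht j)
    _ = (exp (I * ↑(-c)) * ∑ j, (t j : ℂ) * exp (I * μ j)).re :=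
        (re_exp_neg_mul_sum_mul_exp t μ c).symm
    _ ≤ ‖exp (I * ↑(-c)) * ∑ j, (t j : ℂ) * exp (I * μ j)‖ := re_le_norm _
    _ = ‖∑ j, (t j : ℂ) * exp (I * μ j)‖ := by
        rw [norm_mul, norm_exp_I_mul_ofReal, one_mul]

/-- Every point of the convex hull of points `e^{iμ₁}, …, e^{iμₙ}` on an arc of the unit
circle of length `< π` has distance at least `|e^{iμ₁} + e^{iμₙ}|/2 = cos((μₙ - μ₁)/2)`
from the origin; in particular this applies to `∑ⱼ |qⱼ|² e^{iμⱼ}` for a unit vector `q`. -/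
theorem stmt9 {n : ℕ} (hn : 1 ≤ n) (μ : Fin n → ℝ) (hmono : Monotone μ)
    (harc : μ ⟨n - 1, by omega⟩ - μ ⟨0, by omega⟩ < Real.pi)
    (t : Fin n → ℝ) (ht : ∀ j, 0 ≤ t j) (hsum : ∑ j, t j = 1) :
    ‖Complex.exp (Complex.I * (μ ⟨0, by omega⟩ : ℂ)) +
        Complex.exp (Complex.I * (μ ⟨n - 1, by omega⟩ : ℂ))‖ / 2
      ≤ ‖∑ j, (t j : ℂ) * Complex.exp (Complex.I * (μ j : ℂ))‖
    ∧ ‖Complex.exp (Complex.I * (μ ⟨0, by omega⟩ : ℂ)) +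
        Complex.exp (Complex.I * (μ ⟨n - 1, by omega⟩ : ℂ))‖ / 2
      = Real.cos ((μ ⟨n - 1, by omega⟩ - μ ⟨0, by omega⟩) / 2)
    ∧ ∀ q : Fin n → ℂ, ∑ j, ‖q j‖ ^ 2 = 1 →
        ‖Complex.exp (Complex.I * (μ ⟨0, by omega⟩ : ℂ)) +
            Complex.exp (Complex.I * (μ ⟨n - 1, by omega⟩ : ℂ))‖ / 2
          ≤ ‖∑ j, (‖q j‖ ^ 2 : ℂ) * Complex.exp (Complex.I * (μ j : ℂ))‖ := by
  have hμ : ∀ j, μ j ∈ Set.Icc (μ ⟨0, by omega⟩) (μ ⟨n - 1, by omega⟩) := fun j =>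
    ⟨hmono (Fin.mk_le_of_le_val (Nat.zero_le _)), hmono (Fin.le_def.2 (by simp; omega))⟩
  have hcos : 0 ≤ Real.cos ((μ ⟨n - 1, by omega⟩ - μ ⟨0, by omega⟩) / 2) :=
    Real.cos_nonneg_of_mem_Icc ⟨by linarith [(hμ ⟨0, by omega⟩).2, Real.pi_pos], by linarith⟩
  have hhalf := norm_exp_mul_I_add_exp_mul_I (μ ⟨0, by omega⟩) (μ ⟨n - 1, by omega⟩)
  rw [abs_of_nonneg hcos] at hhalf
  have hbound := cos_half_sub_le_norm_sum_mul_exp (by linarith [Real.pi_pos]) μ hμ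
  refine ⟨?_, by rw [hhalf]; ring, fun q hq => ?_⟩
  · rw [hhalf]; linarith [hbound t ht hsum]
  · have hq' := hbound (fun j => ‖q j‖ ^ 2) (fun j => by positivity) hq
    push_cast at hq'
    rw [hhalf]; linarith
end

section
/- Let n be a positive integer divisible by 4 and let L = n·I − J − (e₁ − e₂)(e₁ − e₂)ᵀ be the Laplacian of the complete graph on n vertices with the edge between vertices 1 and 2 deleted. Then |(exp(i (π/2) L))₁₂| = 1; that is, there is perfect state transfer from vertex 1 to vertex 2 at time π/2. -/
open Matrix

/-- The vector `e₁ - e₂`. -/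
def eVec (n : ℕ) : Fin n → ℝ :=
  fun i => (if (i : ℕ) = 0 then 1 else 0) - (if (i : ℕ) = 1 then 1 else 0)

/-- The Laplacian `L = n I - J - (e₁ - e₂)(e₁ - e₂)ᵀ` of the complete graph on `n`
vertices with the edge between vertices 1 and 2 deleted. -/
def lap (n : ℕ) : Matrix (Fin n) (Fin n) ℝ :=
  (n : ℝ) • (1 : Matrix (Fin n) (Fin n) ℝ) - Matrix.of (fun _ _ => (1 : ℝ))
    - Matrix.vecMulVec (eVec n) (eVec n)

/-!
Write `L = n • 1 - J - v vᵀ` with `J = 𝟙 𝟙ᵀ` and `v = e₁ - e₂`. The three summands commute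
because `𝟙 ⬝ᵥ v = 0`, and since `J² = n • J` and `(v vᵀ)² = 2 • v vᵀ`, each factor of
`exp (i t L)` has the form `exp (c • P) = 1 + ((e^{ck} - 1) / k) • P` for `P² = k • P`.
At `t = π/2` with `4 ∣ n` we have `e^{± i π n / 2} = 1`, so the first two factors are `1`,
while `e^{-i π} = -1` turns the last one into `1 - v vᵀ`, whose `(1,2)` entry is `1`.
-/

open scoped Nat

namespace NormedSpace

variable {𝔸 : Type*} [Ring 𝔸] [Algebra ℂ 𝔸] [TopologicalSpace 𝔸] [IsTopologicalRing 𝔸]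
  [ContinuousSMul ℂ 𝔸] [T2Space 𝔸]

theorem exp_smul_of_isIdempotentElem {P : 𝔸} (hP : IsIdempotentElem P) (c : ℂ) :
    exp (c • P) = 1 + (Complex.exp c - 1) • P := by
  have hterm (k : ℕ) : (k !⁻¹ : ℂ) • (c • P) ^ k
      = ((k !⁻¹ : ℂ) * c ^ k) • P + if k = 0 then 1 - P else 0 := by
    rcases k with _ | k
    · simp
    · rw [smul_pow, hP.pow_succ_eq, smul_smul]; simp
  have hexp : HasSum (fun k : ℕ => (k !⁻¹ : ℂ) * c ^ k) (Complex.exp c) := by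
    simpa [Complex.exp_eq_exp_ℂ, smul_eq_mul] using exp_series_hasSum_exp' (𝕂 := ℂ) c
  rw [exp_eq_tsum ℂ]
  simp only [hterm, ((hexp.smul_const P).add (hasSum_ite_eq 0 (1 - P))).tsum_eq]
  module

theorem exp_smul_of_mul_self_eq_smul {P : 𝔸} {k : ℂ} (hk : k ≠ 0) (hP : P * P = k • P)
    (c : ℂ) : exp (c • P) = 1 + (k⁻¹ * (Complex.exp (c * k) - 1)) • P := by
  have hidem : IsIdempotentElem (k⁻¹ • P) := by
    rw [IsIdempotentElem, smul_mul_smul_comm, hP, smul_smul, inv_mul_cancel_right₀ hk]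
  rw [show c • P = (c * k) • k⁻¹ • P by rw [smul_smul, mul_inv_cancel_right₀ hk],
    exp_smul_of_isIdempotentElem hidem, smul_smul, mul_comm]

end NormedSpace

namespace Matrix

variable {m α : Type*} [Fintype m] [CommSemiring α]

theorem vecMulVec_self_mul_self (u : m → α) :
    vecMulVec u u * vecMulVec u u = (u ⬝ᵥ u) • vecMulVec u u := by
  rw [vecMulVec_mul_vecMulVec, vecMulVec_smul]

theorem commute_vecMulVec_self_of_dotProduct_eq_zero {u v : m → α} (h : u ⬝ᵥ v = 0) :
    Commute (vecMulVec u u) (vecMulVec v v) := by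
  rw [Commute, SemiconjBy, vecMulVec_mul_vecMulVec, vecMulVec_mul_vecMulVec, h,
    dotProduct_comm, h, zero_smul, zero_smul, vecMulVec_zero, vecMulVec_zero]

end Matrix

theorem ofReal_comp_eVec {n : ℕ} (h : 1 < n) :
    Complex.ofReal ∘ eVec n = Pi.single ⟨0, by omega⟩ 1 - Pi.single ⟨1, h⟩ 1 := by
  ext i
  simp [eVec, Pi.single_apply, Fin.ext_iff, apply_ite Complex.ofReal]

theorem lap_map_ofReal (n : ℕ) :
    (lap n).map Complex.ofReal = (n : ℂ) • 1 - vecMulVec 1 1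
      - vecMulVec (Complex.ofReal ∘ eVec n) (Complex.ofReal ∘ eVec n) := by
  ext i j
  simp [lap, vecMulVec_apply, one_apply, apply_ite Complex.ofReal]

open Complex in
theorem exp_lap_pi_div_two {n : ℕ} (hn : 0 < n) (h4 : 4 ∣ n) :
    NormedSpace.exp (I • ((Real.pi / 2 : ℝ) : ℂ) • (lap n).map ofReal)
      = 1 - vecMulVec (ofReal ∘ eVec n) (ofReal ∘ eVec n) := by
  obtain ⟨m, hm⟩ := h4
  set v : Fin n → ℂ := ofReal ∘ eVec n
  have hv : v = Pi.single ⟨0, hn⟩ 1 - Pi.single ⟨1, by omega⟩ 1 := ofReal_comp_eVec (by omega)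
  have h1v : (1 : Fin n → ℂ) ⬝ᵥ v = 0 := by simp [hv]
  have hvv : v ⬝ᵥ v = 2 := by simp [hv]; norm_num
  have hn0 : (n : ℂ) ≠ 0 := Nat.cast_ne_zero.mpr hn.ne'
  have hsplit : I • ((Real.pi / 2 : ℝ) : ℂ) • (lap n).map ofReal
      = (I * (Real.pi / 2) * n) • 1
        + ((-(I * (Real.pi / 2))) • vecMulVec 1 1 + (-(I * (Real.pi / 2))) • vecMulVec v v) := by
    rw [lap_map_ofReal, smul_smul]
    push_cast
    module
  have hcn : Complex.exp (I * (Real.pi / 2) * n) = 1 := by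
    rw [show I * (Real.pi / 2) * n = m * (2 * Real.pi * I) by rw [hm]; push_cast; ring]
    exact exp_nat_mul_two_pi_mul_I m
  have hcn' : Complex.exp (-(I * (Real.pi / 2)) * n) = 1 := by
    rw [neg_mul, Complex.exp_neg, hcn, inv_one]
  have hc2 : Complex.exp (-(I * (Real.pi / 2)) * 2) = -1 := by
    rw [show -(I * (Real.pi / 2)) * 2 = -(Real.pi * I) by ring, Complex.exp_neg, exp_pi_mul_I]
    norm_num
  rw [hsplit, Matrix.exp_add_of_commute _ _ ((Commute.one_left _).smul_left _),
    Matrix.exp_add_of_commute _ _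
      (((commute_vecMulVec_self_of_dotProduct_eq_zero h1v).smul_left _).smul_right _),
    NormedSpace.exp_smul_of_isIdempotentElem .one, hcn,
    NormedSpace.exp_smul_of_mul_self_eq_smul hn0 (by rw [vecMulVec_self_mul_self]; simp), hcn',
    NormedSpace.exp_smul_of_mul_self_eq_smul two_ne_zero (by rw [vecMulVec_self_mul_self, hvv]),
    hc2]
  norm_num
  module

/-- If `4 ∣ n` then the Laplacian of the complete graph on `n` vertices minus the edge
`{1,2}` admits perfect state transfer from vertex 1 to vertex 2 at time `π/2`. -/
theorem stmt13 {n : ℕ} (hn : 0 < n) (hdvd : 4 ∣ n) :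
    norm
      ((NormedSpace.exp (Complex.I • ((Real.pi / 2 : ℝ) : ℂ) •
          (lap n).map (fun x => (x : ℂ)))) ⟨0, by omega⟩ ⟨1, by omega⟩) = 1 := by
  rw [exp_lap_pi_div_two hn hdvd, ofReal_comp_eVec (by omega)]
  simp [vecMulVec_apply]
end

section
/- Let n ≥ 3 be an integer and let h be a real number with cos(2h) ≠ 1. Then [1 − ((n−2)/(2n))(1 − cos 2h) − (1/n)(1 − cos((n−2)h)) − ((n−2)/n²)(1 − cos nh)] − [1 − (n−1)²(1 − cos 2h)/(2n²) − (n−1)(2 − cos((n−2)h) − cos(nh))/n² − (cos((n−2)h) − cos(nh))²/(2n²(1 − cos 2h))] = (cos((n−2)h) − cos(nh) + 1 − cos 2h)²/(2n²(1 − cos 2h)). In particular the left-hand bracketed expression (the exact fidelity for the complete graph minus an edge) exceeds the right-hand bracketed expression (the general Laplacian timing-error lower bound with λ₂ = n−2, λₙ = n) by this nonnegative quantity. -/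
/-- Trigonometric identity quantifying the gap between the exact fidelity for the
complete graph minus an edge and the Laplacian timing-error lower bound (with
`λ₂ = n - 2`, `λₙ = n`), together with the nonnegativity of the gap. -/
theorem stmt15 (n : ℕ) (hn : 3 ≤ n) (h : ℝ) (hcos : Real.cos (2 * h) ≠ 1) :
    (1 - ((n : ℝ) - 2) / (2 * n) * (1 - Real.cos (2 * h))
        - (1 / (n : ℝ)) * (1 - Real.cos (((n : ℝ) - 2) * h))
        - ((n : ℝ) - 2) / (n : ℝ) ^ 2 * (1 - Real.cos ((n : ℝ) * h)))
      - (1 - ((n : ℝ) - 1) ^ 2 * (1 - Real.cos (2 * h)) / (2 * (n : ℝ) ^ 2)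
        - ((n : ℝ) - 1) * (2 - Real.cos (((n : ℝ) - 2) * h) - Real.cos ((n : ℝ) * h)) / (n : ℝ) ^ 2
        - (Real.cos (((n : ℝ) - 2) * h) - Real.cos ((n : ℝ) * h)) ^ 2 /
            (2 * (n : ℝ) ^ 2 * (1 - Real.cos (2 * h))))
      = (Real.cos (((n : ℝ) - 2) * h) - Real.cos ((n : ℝ) * h) + 1 - Real.cos (2 * h)) ^ 2 /
          (2 * (n : ℝ) ^ 2 * (1 - Real.cos (2 * h)))
    ∧ 0 ≤ (Real.cos (((n : ℝ) - 2) * h) - Real.cos ((n : ℝ) * h) + 1 - Real.cos (2 * h)) ^ 2 /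
          (2 * (n : ℝ) ^ 2 * (1 - Real.cos (2 * h))) := by
  have hn0 : (n : ℝ) ≠ 0 := by positivity
  have hc : 1 - Real.cos (2 * h) ≠ 0 := sub_ne_zero.mpr (Ne.symm hcos)
  have hcpos : 0 < 1 - Real.cos (2 * h) :=
    lt_of_le_of_ne (sub_nonneg.mpr (Real.cos_le_one _)) (Ne.symm hc)
  constructor
  · field_simp
    ring
  · positivity
end

section
/- Let H be an n×n real symmetric matrix, let v ∈ ℝⁿ be a unit vector with Hv = λv for some real λ, let t₀ be a real number, and let ε > 0. Then ‖exp(i(t₀H + ε·vvᵀ)) − exp(i t₀ H)‖ = |e^{iε} − 1|, where ‖·‖ is the operator (spectral) norm. Consequently, since ‖ε·vvᵀ‖ = ε, the ratio ‖exp(i(t₀H + ε·vvᵀ)) − exp(i t₀ H)‖ / (ε e^{ε}) tends to 1 as ε → 0⁺, so the general estimate ‖exp(i(t₀H + H₀)) − exp(i t₀ H)‖ ≤ ‖H₀‖e^{‖H₀‖} is asymptotically sharp. -/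
/-!
`P = vvᵀ` is an orthogonal projection, and since `v` is an eigenvector of the symmetric matrix
`t₀H`, the matrix `A = t₀H` commutes with `P` and satisfies `AP = t₀λP`. Hence
`exp(i(A + εP)) = exp(iA) exp(iεP) = exp(iA) (1 + (e^{iε} - 1)P)` and `exp(iA)P = e^{it₀λ}P`, so
the difference of the two exponentials is `(e^{iε} - 1) e^{it₀λ} P`, whose norm is `|e^{iε} - 1|`
because `‖P‖ = 1`. The limit is then the derivative of `t ↦ e^{it}` at `0`, which has modulus `1`.
-/

open Matrix NormedSpace Filter Topology
open scoped Matrix.Norms.L2Operator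

section BanachAlgebra

variable {𝕂 𝔸 : Type*} [RCLike 𝕂] [NormedRing 𝔸] [NormedAlgebra 𝕂 𝔸] [CompleteSpace 𝔸]

theorem NormedSpace.exp_mul_of_mul_eq_smul {a p : 𝔸} {μ : 𝕂} (h : a * p = μ • p) :
    exp a * p = exp μ • p := by
  have hpow : ∀ k : ℕ, a ^ k * p = μ ^ k • p := by
    intro k
    induction k with
    | zero => simp
    | succ k ih => rw [pow_succ', mul_assoc, ih, mul_smul_comm, h, smul_smul, ← pow_succ]
  rw [congrFun (exp_eq_tsum 𝕂) a, congrFun (exp_eq_tsum 𝕂) μ,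
    ← (expSeries_summable' (𝕂 := 𝕂) a).tsum_mul_right,
    ← (expSeries_summable' (𝕂 := 𝕂) μ).tsum_smul_const]
  simp only [smul_mul_assoc, hpow, smul_smul, smul_eq_mul]

theorem IsIdempotentElem.exp_smul {p : 𝔸} (hp : IsIdempotentElem p) (c : 𝕂) :
    exp (c • p) = 1 + (exp c - 1) • p := by
  have hp₁ : exp (c • p) * p = exp c • p :=
    exp_mul_of_mul_eq_smul (by rw [smul_mul_assoc, hp.eq])
  have hp₀ : exp (c • p) * (1 - p) = 1 - p := by
    simpa using exp_mul_of_mul_eq_smul (μ := (0 : 𝕂)) (a := c • p) (p := 1 - p)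
      (by simp [mul_sub, hp.eq])
  calc exp (c • p) = exp (c • p) * p + exp (c • p) * (1 - p) := by
        rw [← mul_add, add_sub_cancel, mul_one]
    _ = 1 + (exp c - 1) • p := by rw [hp₁, hp₀, sub_smul, one_smul]; abel

theorem IsIdempotentElem.exp_add_smul {a p : 𝔸} (hp : IsIdempotentElem p) (hap : Commute a p)
    {μ : 𝕂} (h : a * p = μ • p) (c : 𝕂) :
    exp (a + c • p) = exp a + ((exp c - 1) * exp μ) • p := by
  have hball (x : 𝔸) : x ∈ Metric.eball (0 : 𝔸) (expSeries 𝕂 𝔸).radius := by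
    simp [expSeries_radius_eq_top]
  rw [exp_add_of_commute_of_mem_ball (hap.smul_right c) (hball a) (hball _), hp.exp_smul,
    mul_add, mul_one, mul_smul_comm, exp_mul_of_mul_eq_smul h, smul_smul]

end BanachAlgebra

namespace Matrix

section RankOne

variable {n R : Type*} [Fintype n] [CommSemiring R]

theorem isIdempotentElem_vecMulVec_self {v : n → R} (hv : v ⬝ᵥ v = 1) :
    IsIdempotentElem (vecMulVec v v) := by
  rw [IsIdempotentElem, vecMulVec_mul_vecMulVec, hv, one_smul]

theorem mul_vecMulVec_self_of_mulVec_eq_smul {A : Matrix n n R} {v : n → R} {μ : R}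
    (h : A *ᵥ v = μ • v) : A * vecMulVec v v = μ • vecMulVec v v := by
  rw [mul_vecMulVec, h, smul_vecMulVec]

theorem IsSymm.commute_vecMulVec_self {A : Matrix n n R} (hA : A.IsSymm) {v : n → R} {μ : R}
    (h : A *ᵥ v = μ • v) : Commute A (vecMulVec v v) := by
  rw [Commute, SemiconjBy, mul_vecMulVec_self_of_mulVec_eq_smul h, vecMulVec_mul,
    ← mulVec_transpose, hA.eq, h, vecMulVec_smul]

end RankOne

section L2

variable {𝕜 m n : Type*} [RCLike 𝕜] [Fintype m] [Fintype n] [DecidableEq n]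

theorem l2_opNorm_vecMulVec_star (x : EuclideanSpace 𝕜 m) (y : EuclideanSpace 𝕜 n) :
    ‖vecMulVec x.ofLp (star y.ofLp)‖ = ‖x‖ * ‖y‖ := by
  rw [← InnerProductSpace.symm_toEuclideanLin_rankOne, l2_opNorm_def, LinearEquiv.trans_apply,
    LinearEquiv.apply_symm_apply]
  exact InnerProductSpace.norm_rankOne x y

theorem l2_opNorm_vecMulVec_self {u : n → 𝕜} (hu : star u = u) (h : u ⬝ᵥ u = 1) :
    ‖vecMulVec u u‖ = 1 := by
  have hunit : ‖WithLp.toLp 2 u‖ ^ 2 = 1 := by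
    rw [@norm_sq_eq_re_inner 𝕜, EuclideanSpace.inner_eq_star_dotProduct]
    simp [hu, h]
  have := l2_opNorm_vecMulVec_star (WithLp.toLp 2 u) (WithLp.toLp 2 u)
  simp only [hu] at this
  rw [this, ← sq, hunit]

end L2

end Matrix

theorem HasDerivAt.tendsto_norm_sub_div_nhdsGT {E : Type*} [NormedAddCommGroup E]
    [NormedSpace ℝ E] {f : ℝ → E} {f' : E} {x : ℝ} (hf : HasDerivAt f f' x) :
    Tendsto (fun t => ‖f t - f x‖ / (t - x)) (𝓝[>] x) (𝓝 ‖f'‖) := by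
  refine ((hasDerivAt_iff_tendsto_slope.mp hf).mono_left
    (nhdsWithin_mono _ fun t (ht : x < t) => ht.ne')).norm.congr'
    (eventually_nhdsWithin_of_forall fun t (ht : x < t) => ?_)
  rw [slope_def_module, norm_smul, norm_inv, Real.norm_of_nonneg (sub_nonneg.mpr ht.le),
    inv_mul_eq_div]

theorem tendsto_norm_exp_mul_I_sub_one_div_nhdsGT :
    Tendsto (fun t : ℝ => ‖Complex.exp (Complex.I * t) - 1‖ / t) (𝓝[>] 0) (𝓝 1) := by
  have hderiv : HasDerivAt (fun t : ℝ => Complex.exp (Complex.I * t)) Complex.I 0 := by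
    simpa using ((hasDerivAt_id (0 : ℝ)).ofReal_comp.const_mul Complex.I).cexp
  simpa using hderiv.tendsto_norm_sub_div_nhdsGT

theorem Matrix.norm_exp_I_smul_map_add_vecMulVec_sub {n : Type*} [Fintype n] [DecidableEq n]
    {H : Matrix n n ℝ} (hH : H.IsSymm) {v : n → ℝ} (hv : v ⬝ᵥ v = 1) {lam : ℝ}
    (heig : H *ᵥ v = lam • v) (e : ℝ) :
    ‖exp (Complex.I • (H + e • vecMulVec v v).map (fun x => (x : ℂ)))
        - exp (Complex.I • H.map (fun x => (x : ℂ)))‖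
      = ‖Complex.exp (Complex.I * e) - 1‖ := by
  set A : Matrix n n ℂ := H.map (fun x => (x : ℂ))
  set u : n → ℂ := fun i => (v i : ℂ)
  have hu_star : star u = u := funext fun i => Complex.conj_ofReal (v i)
  have hu : u ⬝ᵥ u = 1 := (Complex.ofRealHom.map_dotProduct v v).symm.trans (by simp [hv])
  have hAu : A *ᵥ u = (lam : ℂ) • u := by
    ext i
    exact (Complex.ofRealHom.map_mulVec H v i).symm.trans (by simp [heig, u])
  have hsplit : Complex.I • (H + e • vecMulVec v v).map (fun x => (x : ℂ))
      = Complex.I • A + (Complex.I * e) • vecMulVec u u := by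
    ext i j
    simp only [smul_apply, map_apply, add_apply, vecMulVec_apply, smul_eq_mul, Complex.ofReal_add,
      Complex.ofReal_mul, A, u]
    ring
  have hIAu : (Complex.I • A) * vecMulVec u u = (Complex.I * lam) • vecMulVec u u := by
    rw [smul_mul_assoc, mul_vecMulVec_self_of_mulVec_eq_smul hAu, smul_smul]
  rw [hsplit, (isIdempotentElem_vecMulVec_self hu).exp_add_smul
      (((hH.map _).commute_vecMulVec_self hAu).smul_left _) hIAu, add_sub_cancel_left,
    norm_smul, l2_opNorm_vecMulVec_self hu_star hu, mul_one, norm_mul, ← Complex.exp_eq_exp_ℂ,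
    mul_comm Complex.I (lam : ℂ), Complex.norm_exp_ofReal_mul_I, mul_one]

/-- Sharpness of the exponential perturbation bound: perturbing by `ε vvᵀ` for a unit
eigenvector `v` of `H` gives `‖exp(i(t₀H + ε vvᵀ)) - exp(i t₀H)‖ = |e^{iε} - 1|`,
`‖ε vvᵀ‖ = ε`, and the ratio to the general bound `‖H₀‖e^{‖H₀‖}` tends to `1` as
`ε → 0⁺`. -/
theorem stmt16 {n : ℕ} (H : Matrix (Fin n) (Fin n) ℝ) (hH : H.IsSymm)
    (v : Fin n → ℝ) (hv : v ⬝ᵥ v = 1) (lam : ℝ) (heig : H.mulVec v = lam • v)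
    (t₀ : ℝ) (ε : ℝ) (hε : 0 < ε) :
    ‖NormedSpace.exp (Complex.I •
          (t₀ • H + ε • Matrix.vecMulVec v v).map (fun x => (x : ℂ)))
        - NormedSpace.exp (Complex.I • (t₀ • H).map (fun x => (x : ℂ)))‖
      = ‖Complex.exp (Complex.I * (ε : ℂ)) - 1‖
    ∧ ‖ε • Matrix.vecMulVec v v‖ = ε
    ∧ Filter.Tendsto (fun e : ℝ =>
        ‖NormedSpace.exp (Complex.I •
              (t₀ • H + e • Matrix.vecMulVec v v).map (fun x => (x : ℂ)))
            - NormedSpace.exp (Complex.I • (t₀ • H).map (fun x => (x : ℂ)))‖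
          / (e * Real.exp e))
        (nhdsWithin 0 (Set.Ioi 0)) (nhds 1) := by
  have hnorm (e : ℝ) := Matrix.norm_exp_I_smul_map_add_vecMulVec_sub (hH.smul t₀) hv
    (lam := t₀ * lam) (by rw [smul_mulVec, heig, smul_smul]) e
  refine ⟨hnorm ε, ?_, ?_⟩
  · rw [norm_smul, l2_opNorm_vecMulVec_self (star_trivial v) hv, Real.norm_of_nonneg hε.le,
      mul_one]
  · have hexp := (Real.continuous_exp.tendsto 0).mono_left (nhdsWithin_le_nhds (s := Set.Ioi 0))
    simp_rw [hnorm, ← div_div]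
    have := tendsto_norm_exp_mul_I_sub_one_div_nhdsGT.div hexp (Real.exp_pos 0).ne'
    rwa [Real.exp_zero, div_one] at this
end

section
/- For every real number x ≥ 0, 2x·e^{x} − x²·e^{2x} ≤ 2x + x² − x³. -/
/-- For every `x ≥ 0`, `2x e^x - x² e^{2x} ≤ 2x + x² - x³`. -/
theorem stmt19 (x : ℝ) (hx : 0 ≤ x) :
    2 * x * Real.exp x - x ^ 2 * Real.exp (2 * x) ≤ 2 * x + x ^ 2 - x ^ 3 := by
  have hE2 : Real.exp (2 * x) = Real.exp x ^ 2 := by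
    rw [two_mul, Real.exp_add]; ring
  set E := Real.exp x with hEdef
  have hE0 : (0:ℝ) < E := Real.exp_pos x
  have hlow : 1 + x ≤ E := by have := Real.add_one_le_exp x; linarith
  rw [hE2]
  rcases le_or_gt x (1/2) with h2 | h2
  · -- use degree-3 upper Taylor bound
    have hub := Real.exp_bound' hx (by linarith) (n := 3) (by norm_num)
    have hub' : E ≤ 1 + x + x ^ 2 / 2 + x ^ 3 * (2/9) := by
      refine hub.trans_eq ?_
      simp [Finset.sum_range_succ, Nat.factorial]
      norm_num
      ring
    nlinarith [mul_le_mul_of_nonneg_left hub' hx,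
      mul_le_mul_of_nonneg_left hlow hx,
      sq_nonneg (x * E - x - x ^ 2), sq_nonneg x, sq_nonneg (x * E),
      mul_nonneg hx hE0.le, sq_nonneg (1 - x * E)]
  · rcases le_or_gt (x ^ 3 - x ^ 2 - 2 * x + 1) 0 with h3 | h3
    · nlinarith [sq_nonneg (x * E - 1)]
    · have hx1 : 1 ≤ x := by nlinarith
      nlinarith [mul_le_mul_of_nonneg_left hlow hx,
        sq_nonneg (x * E - 1), mul_nonneg hx hE0.le,
        sq_nonneg (x ^ 2 + x - 1)]
end
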